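/- arXiv:math/0410557 — 4 statements merged into one kernel-verified Lean document; each statement's English description precedes it below -/
import Mathlib

section
/- Let Ω ⊆ ℝ² be open and let u : Ω → ℝ be a C³ solution of the two-dimensional minimal surface equation E(u) = 0 on Ω. Define v : Ω → ℝ by v(x,y) = x + u(x,y)·∂ₓu(x,y) (the symmetry φ̄₃¹ of Proposition 1). Then for every point (x,y) ∈ Ω, the function ε ↦ E(u + εv)(x,y) is differentiable at ε = 0 with derivative 0. -/
/-- Partial derivative in the `x` direction of a function on `ℝ²`. -/
noncomputable def px (f : ℝ × ℝ → ℝ) (z : ℝ × ℝ) : ℝ := fderiv ℝ f z (1, 0)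

/-- Partial derivative in the `y` direction of a function on `ℝ²`. -/
noncomputable def py (f : ℝ × ℝ → ℝ) (z : ℝ × ℝ) : ℝ := fderiv ℝ f z (0, 1)

/-- The two-dimensional minimal surface operator
`E(w) = (1 + w_y²)·w_xx − 2·w_x·w_y·w_xy + (1 + w_x²)·w_yy`. -/
noncomputable def msOp (w : ℝ × ℝ → ℝ) (z : ℝ × ℝ) : ℝ :=
  (1 + (py w z) ^ 2) * px (px w) z - 2 * px w z * py w z * py (px w) z
    + (1 + (px w z) ^ 2) * py (py w) z


/-!
Differentiating `E(u + ε v)` at `ε = 0` gives the linearised operator `L_u v` (`msOpLin`),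
which only involves derivatives of `u` and `v` up to order two. For `v = φ̄₃¹ = x + u·u_x`,
expanding `L_u v` and identifying the mixed third derivatives of `u` (Schwarz) gives
`L_u (x + u·u_x) = 3·u_x·E(u) + u·∂ₓE(u)`, and both terms vanish because `E(u) = 0` on the
open set `Ω`.
-/

open Filter Topology

theorem fderiv_fderiv_apply {E F : Type*} [NormedAddCommGroup E] [NormedSpace ℝ E]
    [NormedAddCommGroup F] [NormedSpace ℝ F] {f : E → F} {z v d : E}
    (hf : DifferentiableAt ℝ (fderiv ℝ f) z) :
    fderiv ℝ (fun w => fderiv ℝ f w v) z d = fderiv ℝ (fderiv ℝ f) z d v := by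
  have h : HasFDerivAt (fun w => fderiv ℝ f w v)
      ((ContinuousLinearMap.apply ℝ F v).comp (fderiv ℝ (fderiv ℝ f) z)) z :=
    (ContinuousLinearMap.apply ℝ F v).hasFDerivAt.comp z hf.hasFDerivAt
  rw [h.fderiv]; rfl

section PartialDerivatives

variable {f g : ℝ × ℝ → ℝ} {z : ℝ × ℝ}

theorem px_congr (h : f =ᶠ[𝓝 z] g) : px f z = px g z := by rw [px, px, h.fderiv_eq]

theorem py_congr (h : f =ᶠ[𝓝 z] g) : py f z = py g z := by rw [py, py, h.fderiv_eq]

theorem px_const (c : ℝ) : px (fun _ => c) z = 0 := by simp [px]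

theorem px_fst : px (fun w : ℝ × ℝ => w.1) z = 1 := by
  rw [px, (hasFDerivAt_fst (p := z)).fderiv]; rfl

theorem py_fst : py (fun w : ℝ × ℝ => w.1) z = 0 := by
  rw [py, (hasFDerivAt_fst (p := z)).fderiv]; rfl

theorem px_add (hf : DifferentiableAt ℝ f z) (hg : DifferentiableAt ℝ g z) :
    px (fun w => f w + g w) z = px f z + px g z := by simp [px, fderiv_fun_add hf hg]

theorem py_add (hf : DifferentiableAt ℝ f z) (hg : DifferentiableAt ℝ g z) :
    py (fun w => f w + g w) z = py f z + py g z := by simp [py, fderiv_fun_add hf hg]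

theorem px_sub (hf : DifferentiableAt ℝ f z) (hg : DifferentiableAt ℝ g z) :
    px (fun w => f w - g w) z = px f z - px g z := by simp [px, fderiv_fun_sub hf hg]

theorem px_const_add (c : ℝ) : px (fun w => c + f w) z = px f z := by
  simp [px, fderiv_const_add]

theorem py_const_add (c : ℝ) : py (fun w => c + f w) z = py f z := by
  simp [py, fderiv_const_add]

theorem px_const_mul (hf : DifferentiableAt ℝ f z) (c : ℝ) :
    px (fun w => c * f w) z = c * px f z := by simp [px, fderiv_const_mul hf]

theorem py_const_mul (hf : DifferentiableAt ℝ f z) (c : ℝ) :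
    py (fun w => c * f w) z = c * py f z := by simp [py, fderiv_const_mul hf]

theorem px_mul (hf : DifferentiableAt ℝ f z) (hg : DifferentiableAt ℝ g z) :
    px (fun w => f w * g w) z = px f z * g z + f z * px g z := by
  simp only [px, fderiv_fun_mul hf hg, add_apply, smul_apply, smul_eq_mul]
  ring

theorem py_mul (hf : DifferentiableAt ℝ f z) (hg : DifferentiableAt ℝ g z) :
    py (fun w => f w * g w) z = py f z * g z + f z * py g z := by
  simp only [py, fderiv_fun_mul hf hg, add_apply, smul_apply, smul_eq_mul]
  ring

theorem px_sq (hf : DifferentiableAt ℝ f z) :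
    px (fun w => f w ^ 2) z = 2 * f z * px f z := by
  simp only [sq, px_mul hf hf]; ring

theorem contDiffAt_px {m n : WithTop ℕ∞} (hf : ContDiffAt ℝ n f z) (hmn : m + 1 ≤ n) :
    ContDiffAt ℝ m (px f) z :=
  (ContinuousLinearMap.apply ℝ ℝ ((1 : ℝ), (0 : ℝ))).contDiff.contDiffAt.comp z
    (hf.fderiv_right hmn)

theorem contDiffAt_py {m n : WithTop ℕ∞} (hf : ContDiffAt ℝ n f z) (hmn : m + 1 ≤ n) :
    ContDiffAt ℝ m (py f) z :=
  (ContinuousLinearMap.apply ℝ ℝ ((0 : ℝ), (1 : ℝ))).contDiff.contDiffAt.comp z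
    (hf.fderiv_right hmn)

theorem differentiableAt_px (hf : ContDiffAt ℝ 2 f z) :
    DifferentiableAt ℝ (px f) z :=
  (contDiffAt_px (m := 1) hf (by norm_num)).differentiableAt one_ne_zero

theorem differentiableAt_py (hf : ContDiffAt ℝ 2 f z) :
    DifferentiableAt ℝ (py f) z :=
  (contDiffAt_py (m := 1) hf (by norm_num)).differentiableAt one_ne_zero

theorem px_py_eq_py_px (hf : ContDiffAt ℝ 2 f z) : px (py f) z = py (px f) z := by
  have hd : DifferentiableAt ℝ (fderiv ℝ f) z :=
    (hf.fderiv_right (m := 1) (by norm_num)).differentiableAt one_ne_zero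
  have hxy : px (py f) z = fderiv ℝ (fderiv ℝ f) z (1, 0) (0, 1) := fderiv_fderiv_apply hd
  have hyx : py (px f) z = fderiv ℝ (fderiv ℝ f) z (0, 1) (1, 0) := fderiv_fderiv_apply hd
  rw [hxy, hyx, (hf.isSymmSndFDerivAt (by simp)).eq]

end PartialDerivatives

section Linearization

variable {u v : ℝ × ℝ → ℝ} {z : ℝ × ℝ}

noncomputable def msOpLin (u v : ℝ × ℝ → ℝ) (z : ℝ × ℝ) : ℝ :=
  (1 + py u z ^ 2) * px (px v) z - 2 * px u z * py u z * py (px v) z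
    + (1 + px u z ^ 2) * py (py v) z
    + 2 * py u z * py v z * px (px u) z
    - 2 * (px v z * py u z + px u z * py v z) * py (px u) z
    + 2 * px u z * px v z * py (py u) z

theorem px_add_mul (hu : DifferentiableAt ℝ u z) (hv : DifferentiableAt ℝ v z) (ε : ℝ) :
    px (fun w => u w + ε * v w) z = px u z + ε * px v z := by
  rw [px_add hu (hv.const_mul ε), px_const_mul hv]

theorem py_add_mul (hu : DifferentiableAt ℝ u z) (hv : DifferentiableAt ℝ v z) (ε : ℝ) :
    py (fun w => u w + ε * v w) z = py u z + ε * py v z := by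
  rw [py_add hu (hv.const_mul ε), py_const_mul hv]

theorem msOp_add_mul (hu : ContDiffAt ℝ 2 u z) (hv : ContDiffAt ℝ 2 v z) (ε : ℝ) :
    msOp (fun w => u w + ε * v w) z =
      (1 + (py u z + ε * py v z) ^ 2) * (px (px u) z + ε * px (px v) z)
        - 2 * (px u z + ε * px v z) * (py u z + ε * py v z) * (py (px u) z + ε * py (px v) z)
        + (1 + (px u z + ε * px v z) ^ 2) * (py (py u) z + ε * py (py v) z) := by
  have hdiff : ∀ᶠ w in 𝓝 z, DifferentiableAt ℝ u w ∧ DifferentiableAt ℝ v w :=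
    ((hu.eventually (by simp)).and (hv.eventually (by simp))).mono fun w hw =>
      ⟨hw.1.differentiableAt (by simp), hw.2.differentiableAt (by simp)⟩
  have hx : px (fun w => u w + ε * v w) =ᶠ[𝓝 z] fun w => px u w + ε * px v w :=
    hdiff.mono fun w hw => px_add_mul hw.1 hw.2 ε
  have hy : py (fun w => u w + ε * v w) =ᶠ[𝓝 z] fun w => py u w + ε * py v w :=
    hdiff.mono fun w hw => py_add_mul hw.1 hw.2 ε
  rw [msOp, px_add_mul (hu.differentiableAt (by simp)) (hv.differentiableAt (by simp)),
    py_add_mul (hu.differentiableAt (by simp)) (hv.differentiableAt (by simp)),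
    px_congr hx, py_congr hx, py_congr hy,
    px_add_mul (differentiableAt_px hu) (differentiableAt_px hv),
    py_add_mul (differentiableAt_px hu) (differentiableAt_px hv),
    py_add_mul (differentiableAt_py hu) (differentiableAt_py hv)]

theorem hasDerivAt_msOp_add_mul (hu : ContDiffAt ℝ 2 u z) (hv : ContDiffAt ℝ 2 v z) :
    HasDerivAt (fun ε : ℝ => msOp (fun w => u w + ε * v w) z) (msOpLin u v z) 0 := by
  have affine : ∀ a b : ℝ, HasDerivAt (fun ε : ℝ => a + ε * b) b 0 := fun a b => by
    simpa using ((hasDerivAt_id (0 : ℝ)).mul_const b).const_add a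
  rw [funext (msOp_add_mul hu hv)]
  have H := (((((affine (py u z) (py v z)).fun_pow 2).const_add 1).fun_mul
    (affine (px (px u) z) (px (px v) z))).fun_sub
    ((((affine (px u z) (px v z)).const_mul 2).fun_mul (affine (py u z) (py v z))).fun_mul
      (affine (py (px u) z) (py (px v) z)))).fun_add
    ((((affine (px u z) (px v z)).fun_pow 2).const_add 1).fun_mul
      (affine (py (py u) z) (py (py v) z)))
  refine H.congr_deriv ?_
  rw [msOpLin]
  push_cast
  ring

end Linearization

section Phibar

variable {u : ℝ × ℝ → ℝ} {z : ℝ × ℝ}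

noncomputable def phibar (u : ℝ × ℝ → ℝ) : ℝ × ℝ → ℝ := fun w => w.1 + u w * px u w

theorem contDiffAt_phibar {m n : WithTop ℕ∞} (hu : ContDiffAt ℝ n u z) (hmn : m + 1 ≤ n) :
    ContDiffAt ℝ m (phibar u) z :=
  contDiffAt_fst.add ((hu.of_le (le_self_add.trans hmn)).mul (contDiffAt_px hu hmn))

theorem px_phibar (hu : ContDiffAt ℝ 2 u z) :
    px (phibar u) z = 1 + px u z * px u z + u z * px (px u) z := by
  have hu1 : DifferentiableAt ℝ u z := hu.differentiableAt (by simp)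
  unfold phibar
  rw [px_add differentiableAt_fst (hu1.fun_mul (differentiableAt_px hu)), px_fst,
    px_mul hu1 (differentiableAt_px hu)]
  ring

theorem py_phibar (hu : ContDiffAt ℝ 2 u z) :
    py (phibar u) z = py u z * px u z + u z * py (px u) z := by
  have hu1 : DifferentiableAt ℝ u z := hu.differentiableAt (by simp)
  unfold phibar
  rw [py_add differentiableAt_fst (hu1.fun_mul (differentiableAt_px hu)), py_fst,
    py_mul hu1 (differentiableAt_px hu)]
  ring

theorem px_px_phibar (hu : ContDiffAt ℝ 3 u z) :
    px (px (phibar u)) z = 3 * px u z * px (px u) z + u z * px (px (px u)) z := by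
  have hx : px (phibar u) =ᶠ[𝓝 z] fun w => 1 + px u w * px u w + u w * px (px u) w :=
    (hu.eventually (by simp)).mono fun w hw => px_phibar (hw.of_le (by norm_num))
  have hu1 : DifferentiableAt ℝ u z := hu.differentiableAt (by simp)
  have hux := differentiableAt_px (hu.of_le (by norm_num))
  have huxx := differentiableAt_px (contDiffAt_px (m := 2) hu (by norm_num))
  rw [px_congr hx, px_add ((hux.fun_mul hux).const_add 1) (hu1.fun_mul huxx), px_const_add,
    px_mul hux hux, px_mul hu1 huxx]
  ring

theorem py_px_phibar (hu : ContDiffAt ℝ 3 u z) :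
    py (px (phibar u)) z
      = 2 * px u z * py (px u) z + py u z * px (px u) z + u z * py (px (px u)) z := by
  have hx : px (phibar u) =ᶠ[𝓝 z] fun w => 1 + px u w * px u w + u w * px (px u) w :=
    (hu.eventually (by simp)).mono fun w hw => px_phibar (hw.of_le (by norm_num))
  have hu1 : DifferentiableAt ℝ u z := hu.differentiableAt (by simp)
  have hux := differentiableAt_px (hu.of_le (by norm_num))
  have huxx := differentiableAt_px (contDiffAt_px (m := 2) hu (by norm_num))
  rw [py_congr hx, py_add ((hux.fun_mul hux).const_add 1) (hu1.fun_mul huxx), py_const_add,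
    py_mul hux hux, py_mul hu1 huxx]
  ring

theorem py_py_phibar (hu : ContDiffAt ℝ 3 u z) :
    py (py (phibar u)) z
      = py (py u) z * px u z + 2 * py u z * py (px u) z + u z * py (py (px u)) z := by
  have hy : py (phibar u) =ᶠ[𝓝 z] fun w => py u w * px u w + u w * py (px u) w :=
    (hu.eventually (by simp)).mono fun w hw => py_phibar (hw.of_le (by norm_num))
  have hu1 : DifferentiableAt ℝ u z := hu.differentiableAt (by simp)
  have hux := differentiableAt_px (hu.of_le (by norm_num))
  have huy := differentiableAt_py (hu.of_le (by norm_num))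
  have huxy := differentiableAt_py (contDiffAt_px (m := 2) hu (by norm_num))
  rw [py_congr hy, py_add (huy.fun_mul hux) (hu1.fun_mul huxy), py_mul huy hux, py_mul hu1 huxy]
  ring

theorem px_msOp (hu : ContDiffAt ℝ 3 u z) :
    px (msOp u) z
      = 2 * py u z * px (py u) z * px (px u) z + (1 + py u z ^ 2) * px (px (px u)) z
        - 2 * (px (px u) z * py u z * py (px u) z + px u z * px (py u) z * py (px u) z
          + px u z * py u z * px (py (px u)) z)
        + 2 * px u z * px (px u) z * py (py u) z + (1 + px u z ^ 2) * px (py (py u)) z := by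
  have hux := differentiableAt_px (hu.of_le (by norm_num))
  have huy := differentiableAt_py (hu.of_le (by norm_num))
  have huxx := differentiableAt_px (contDiffAt_px (m := 2) hu (by norm_num))
  have huxy := differentiableAt_py (contDiffAt_px (m := 2) hu (by norm_num))
  have huyy := differentiableAt_py (contDiffAt_py (m := 2) hu (by norm_num))
  have h1 : DifferentiableAt ℝ (fun w => (1 + py u w ^ 2) * px (px u) w) z :=
    ((huy.fun_pow 2).const_add 1).fun_mul huxx
  have h2 : DifferentiableAt ℝ (fun w => 2 * px u w * py u w * py (px u) w) z :=
    ((hux.const_mul 2).fun_mul huy).fun_mul huxy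
  have h3 : DifferentiableAt ℝ (fun w => (1 + px u w ^ 2) * py (py u) w) z :=
    ((hux.fun_pow 2).const_add 1).fun_mul huyy
  unfold msOp
  rw [px_add (h1.fun_sub h2) h3, px_sub h1 h2, px_mul ((huy.fun_pow 2).const_add 1) huxx,
    px_const_add, px_sq huy, px_mul ((hux.const_mul 2).fun_mul huy) huxy,
    px_mul (hux.const_mul 2) huy, px_const_mul hux, px_mul ((hux.fun_pow 2).const_add 1) huyy,
    px_const_add, px_sq hux]
  ring

theorem msOpLin_phibar (hu : ContDiffAt ℝ 3 u z) :
    msOpLin u (phibar u) z = 3 * px u z * msOp u z + u z * px (msOp u) z := by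
  have hu2 : ContDiffAt ℝ 2 u z := hu.of_le (by norm_num)
  have hxy : px (py u) z = py (px u) z := px_py_eq_py_px hu2
  have hxxy : px (py (px u)) z = py (px (px u)) z :=
    px_py_eq_py_px (contDiffAt_px hu (by norm_num))
  have hxyy : px (py (py u)) z = py (py (px u)) z := by
    rw [px_py_eq_py_px (contDiffAt_py hu (by norm_num))]
    exact py_congr ((hu.eventually (by simp)).mono fun w hw =>
      px_py_eq_py_px (hw.of_le (by norm_num)))
  rw [msOpLin, px_msOp hu, px_phibar hu2, py_phibar hu2, px_px_phibar hu, py_px_phibar hu,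
    py_py_phibar hu, hxy, hxxy, hxyy, msOp]
  ring

end Phibar

/-- The section `φ̄₃¹ = x + u·u_x` is an infinitesimal symmetry of the
two-dimensional minimal surface equation at every `C³` solution `u`. -/
theorem phibar_is_infinitesimal_symmetry
    (Ω : Set (ℝ × ℝ)) (hΩ : IsOpen Ω) (u : ℝ × ℝ → ℝ)
    (hu : ContDiffOn ℝ 3 u Ω) (hsol : ∀ z ∈ Ω, msOp u z = 0) :
    ∀ z ∈ Ω, HasDerivAt
      (fun ε : ℝ => msOp (fun w => u w + ε * (w.1 + u w * px u w)) z) 0 0 := by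
  intro z hz
  have hu3 : ContDiffAt ℝ 3 u z := hu.contDiffAt (hΩ.mem_nhds hz)
  have hE : msOp u =ᶠ[𝓝 z] fun _ => 0 := eventually_of_mem (hΩ.mem_nhds hz) hsol
  have h :=
    hasDerivAt_msOp_add_mul (hu3.of_le (by norm_num)) (contDiffAt_phibar hu3 (by norm_num))
  rwa [msOpLin_phibar hu3, hsol z hz, px_congr hE, px_const, mul_zero, mul_zero, add_zero] at h
end

section
/- Let n ≥ 1, let Ω ⊆ ℝⁿ be open, and let u : Ω → ℝ be a C² solution of the n-dimensional minimal surface equation (1 + |∇u|²)·Δu − Σ_{i,j} uᵢuⱼ·∂²u/∂xⁱ∂xʲ = 0 on Ω, where uᵢ = ∂u/∂xⁱ and W = √(1 + |∇u|²). Suppose s¹, …, sⁿ : Ω → ℝ are C¹ nonlocal potentials satisfying ∂sⁱ/∂xⁱ = W on Ω for each i (no summation). Then the nonlocal continuity equation assigned to the dilatation φ₄ holds on Ω: Σᵢ ∂/∂xⁱ ( sⁱ − xⁱ·W − u·uᵢ/W + uᵢ·(Σⱼ xʲuⱼ)/W ) = 0. -/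
/-!
Write `W = √(1 + |∇u|²)`, `φ = u − Σⱼ xʲuⱼ` and `V = ∇u / W`. The flux is
`Fⁱ = sⁱ − W xⁱ − φ Vⁱ`, so `div F = Σᵢ ∂ᵢsⁱ − (nW + x·∇W) − (∇φ·V + φ div V)`, where
`Σᵢ ∂ᵢsⁱ = nW` and the minimal surface equation is `W³ div V = 0`. Finally
`∂ᵢφ = −Σⱼ xʲ ∂ᵢuⱼ` and `∂ⱼW = Σᵢ uᵢ ∂ⱼuᵢ / W`, so symmetry of the second derivatives gives
`∇φ·V = −x·∇W`, and everything cancels.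
-/

open Finset

/-- The partial derivative `∂f/∂xⁱ` of a function on `ℝⁿ`. -/
noncomputable def pd {n : ℕ} (f : EuclideanSpace ℝ (Fin n) → ℝ) (i : Fin n)
    (x : EuclideanSpace ℝ (Fin n)) : ℝ :=
  fderiv ℝ f x (EuclideanSpace.single i 1)

section PartialDerivative

variable {n : ℕ} {f g : EuclideanSpace ℝ (Fin n) → ℝ} {x : EuclideanSpace ℝ (Fin n)}
  {i : Fin n}

theorem pd_eq_of_hasFDerivAt {f' : EuclideanSpace ℝ (Fin n) →L[ℝ] ℝ} (h : HasFDerivAt f f' x) :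
    pd f i x = f' (EuclideanSpace.single i 1) := by
  rw [pd, h.fderiv]

theorem pd_const_add (c : ℝ) : pd (fun y => c + f y) i x = pd f i x := by
  simp [pd, fderiv_const_add]

theorem pd_sub (hf : DifferentiableAt ℝ f x) (hg : DifferentiableAt ℝ g x) :
    pd (fun y => f y - g y) i x = pd f i x - pd g i x := by
  simp [pd, fderiv_fun_sub hf hg]

theorem pd_mul (hf : DifferentiableAt ℝ f x) (hg : DifferentiableAt ℝ g x) :
    pd (fun y => f y * g y) i x = pd f i x * g x + f x * pd g i x := by
  simp [pd, fderiv_fun_mul hf hg]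
  ring

theorem pd_sq (hf : DifferentiableAt ℝ f x) :
    pd (fun y => f y ^ 2) i x = 2 * f x * pd f i x := by
  simp only [sq, pd_mul hf hf]
  ring

theorem pd_div (hf : DifferentiableAt ℝ f x) (hg : DifferentiableAt ℝ g x) (hg₀ : g x ≠ 0) :
    pd (fun y => f y / g y) i x = (pd f i x * g x - f x * pd g i x) / g x ^ 2 := by
  have hinv : HasFDerivAt (fun y => (g y)⁻¹) (-(g x ^ 2)⁻¹ • fderiv ℝ g x) x :=
    (hasDerivAt_inv hg₀).comp_hasFDerivAt x hg.hasFDerivAt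
  simp only [div_eq_mul_inv, pd_mul hf hinv.differentiableAt, pd_eq_of_hasFDerivAt hinv]
  simp only [pd, FunLike.coe_smul, Pi.smul_apply, smul_eq_mul]
  field_simp
  ring

theorem pd_sqrt (hf : DifferentiableAt ℝ f x) (hf₀ : f x ≠ 0) :
    pd (fun y => √(f y)) i x = pd f i x / (2 * √(f x)) := by
  rw [pd_eq_of_hasFDerivAt (hf.hasFDerivAt.sqrt hf₀)]
  simp [pd, smul_eq_mul, div_eq_inv_mul]

theorem pd_sum {ι : Type*} (t : Finset ι) {f : ι → EuclideanSpace ℝ (Fin n) → ℝ}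
    (hf : ∀ j ∈ t, DifferentiableAt ℝ (f j) x) :
    pd (fun y => ∑ j ∈ t, f j y) i x = ∑ j ∈ t, pd (f j) i x := by
  simp [pd, fderiv_fun_sum hf]

theorem pd_coord (j : Fin n) :
    pd (fun y : EuclideanSpace ℝ (Fin n) => y j) i x = if i = j then 1 else 0 := by
  have h : HasFDerivAt (fun y : EuclideanSpace ℝ (Fin n) => y j)
      (EuclideanSpace.proj (𝕜 := ℝ) j) x :=
    (EuclideanSpace.proj (𝕜 := ℝ) j).hasFDerivAt
  rw [pd_eq_of_hasFDerivAt h]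
  simp [eq_comm]

end PartialDerivative

section Divergence

variable {n : ℕ} {x : EuclideanSpace ℝ (Fin n)}

noncomputable def divergence (F : Fin n → EuclideanSpace ℝ (Fin n) → ℝ)
    (x : EuclideanSpace ℝ (Fin n)) : ℝ :=
  ∑ i, pd (F i) i x

theorem divergence_sub {F G : Fin n → EuclideanSpace ℝ (Fin n) → ℝ}
    (hF : ∀ i, DifferentiableAt ℝ (F i) x) (hG : ∀ i, DifferentiableAt ℝ (G i) x) :
    divergence (fun i y => F i y - G i y) x = divergence F x - divergence G x := by
  simp only [divergence, pd_sub (hF _) (hG _), sum_sub_distrib]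

theorem divergence_mul {φ : EuclideanSpace ℝ (Fin n) → ℝ}
    {V : Fin n → EuclideanSpace ℝ (Fin n) → ℝ}
    (hφ : DifferentiableAt ℝ φ x) (hV : ∀ i, DifferentiableAt ℝ (V i) x) :
    divergence (fun i y => φ y * V i y) x = ∑ i, pd φ i x * V i x + φ x * divergence V x := by
  simp only [divergence, pd_mul hφ (hV _), sum_add_distrib, mul_sum]

theorem divergence_coord : divergence (fun i (y : EuclideanSpace ℝ (Fin n)) => y i) x = n := by
  simp [divergence, pd_coord]

end Divergence

section MinimalSurface

variable {n : ℕ} {u : EuclideanSpace ℝ (Fin n) → ℝ} {x : EuclideanSpace ℝ (Fin n)}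

noncomputable def areaDensity (u : EuclideanSpace ℝ (Fin n) → ℝ)
    (y : EuclideanSpace ℝ (Fin n)) : ℝ :=
  √(1 + ∑ j, pd u j y ^ 2)

noncomputable def dilatationCharacteristic (u : EuclideanSpace ℝ (Fin n) → ℝ)
    (y : EuclideanSpace ℝ (Fin n)) : ℝ :=
  u y - ∑ j, y j * pd u j y

theorem one_add_sum_sq_pd_pos (y : EuclideanSpace ℝ (Fin n)) : 0 < 1 + ∑ j, pd u j y ^ 2 := by
  positivity

theorem areaDensity_pos (y : EuclideanSpace ℝ (Fin n)) : 0 < areaDensity u y :=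
  Real.sqrt_pos.mpr (one_add_sum_sq_pd_pos y)

theorem sq_areaDensity (y : EuclideanSpace ℝ (Fin n)) :
    areaDensity u y ^ 2 = 1 + ∑ j, pd u j y ^ 2 :=
  Real.sq_sqrt (one_add_sum_sq_pd_pos y).le

theorem ContDiffAt.differentiableAt_pd (hu : ContDiffAt ℝ 2 u x) (i : Fin n) :
    DifferentiableAt ℝ (pd u i) x :=
  ((hu.fderiv_right le_rfl).clm_apply contDiffAt_const).differentiableAt one_ne_zero

theorem ContDiffAt.pd_pd_comm (hu : ContDiffAt ℝ 2 u x) (i j : Fin n) :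
    pd (pd u i) j x = pd (pd u j) i x := by
  have hd : DifferentiableAt ℝ (fderiv ℝ u) x :=
    (hu.fderiv_right le_rfl).differentiableAt one_ne_zero
  have hpd (k : Fin n) : fderiv ℝ (pd u k) x
      = (fderiv ℝ (fderiv ℝ u) x).flip (EuclideanSpace.single k 1) := by
    have h := fderiv_clm_apply hd (differentiableAt_const (EuclideanSpace.single k 1))
    simp only [fderiv_fun_const, Pi.zero_apply, ContinuousLinearMap.comp_zero, zero_add] at h
    exact h
  rw [pd, pd, hpd, hpd]
  exact hu.isSymmSndFDerivAt (by simp) _ _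

theorem ContDiffAt.differentiableAt_one_add_sum_sq_pd (hu : ContDiffAt ℝ 2 u x) :
    DifferentiableAt ℝ (fun y => 1 + ∑ j, pd u j y ^ 2) x := by
  have := hu.differentiableAt_pd
  fun_prop

theorem ContDiffAt.differentiableAt_areaDensity (hu : ContDiffAt ℝ 2 u x) :
    DifferentiableAt ℝ (areaDensity u) x :=
  hu.differentiableAt_one_add_sum_sq_pd.sqrt (one_add_sum_sq_pd_pos x).ne'

theorem ContDiffAt.differentiableAt_dilatationCharacteristic (hu : ContDiffAt ℝ 2 u x) :
    DifferentiableAt ℝ (dilatationCharacteristic u) x := by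
  have := hu.differentiableAt_pd
  have := hu.differentiableAt two_ne_zero
  unfold dilatationCharacteristic
  fun_prop

theorem ContDiffAt.pd_areaDensity (hu : ContDiffAt ℝ 2 u x) (i : Fin n) :
    pd (areaDensity u) i x = (∑ j, pd u j x * pd (pd u j) i x) / areaDensity u x := by
  have hd := hu.differentiableAt_pd
  unfold areaDensity
  rw [pd_sqrt hu.differentiableAt_one_add_sum_sq_pd (one_add_sum_sq_pd_pos x).ne',
    pd_const_add, pd_sum _ fun j _ => (hd j).fun_pow 2]
  simp only [pd_sq (hd _), mul_assoc, ← mul_sum]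
  field_simp

theorem ContDiffAt.pd_dilatationCharacteristic (hu : ContDiffAt ℝ 2 u x) (i : Fin n) :
    pd (dilatationCharacteristic u) i x = -∑ j, x j * pd (pd u j) i x := by
  have hd := hu.differentiableAt_pd
  have hcoord (j : Fin n) : DifferentiableAt ℝ (fun y : EuclideanSpace ℝ (Fin n) => y j) x := by
    fun_prop
  unfold dilatationCharacteristic
  rw [pd_sub (hu.differentiableAt two_ne_zero) (by fun_prop),
    pd_sum _ fun j _ => (hcoord j).fun_mul (hd j)]
  simp [pd_mul (hcoord _) (hd _), pd_coord, sum_add_distrib]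

theorem ContDiffAt.sum_pd_dilatationCharacteristic_mul (hu : ContDiffAt ℝ 2 u x) :
    ∑ i, pd (dilatationCharacteristic u) i x * (pd u i x / areaDensity u x)
      = -∑ i, pd (areaDensity u) i x * x i := by
  have hsymm : ∑ i, (∑ j, x j * pd (pd u j) i x) * pd u i x
      = ∑ i, (∑ j, pd u j x * pd (pd u j) i x) * x i := by
    simp only [sum_mul]
    rw [sum_comm]
    refine sum_congr rfl fun j _ => sum_congr rfl fun i _ => ?_
    rw [hu.pd_pd_comm j i]
    ring
  simp only [hu.pd_dilatationCharacteristic, hu.pd_areaDensity, div_mul_eq_mul_div,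
    mul_div_assoc', ← sum_div, neg_mul, sum_neg_distrib, hsymm, neg_div]

theorem ContDiffAt.divergence_pd_div_areaDensity (hu : ContDiffAt ℝ 2 u x) :
    divergence (fun i y => pd u i y / areaDensity u y) x
      = ((1 + ∑ j, pd u j x ^ 2) * ∑ i, pd (pd u i) i x
          - ∑ i, ∑ j, pd u i x * pd u j x * pd (pd u i) j x) / areaDensity u x ^ 3 := by
  have hW := (areaDensity_pos (u := u) x).ne'
  have hswap : ∑ i, pd u i x * ∑ j, pd u j x * pd (pd u j) i x
      = ∑ i, ∑ j, pd u i x * pd u j x * pd (pd u i) j x := by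
    simp only [mul_sum]
    rw [sum_comm]
    exact sum_congr rfl fun _ _ => sum_congr rfl fun _ _ => by ring
  have hterm (i : Fin n) : pd (fun y => pd u i y / areaDensity u y) i x
      = (pd (pd u i) i x * areaDensity u x ^ 2
          - pd u i x * ∑ j, pd u j x * pd (pd u j) i x) / areaDensity u x ^ 3 := by
    rw [pd_div (hu.differentiableAt_pd i) hu.differentiableAt_areaDensity hW, hu.pd_areaDensity]
    field_simp
  simp only [divergence, hterm, ← sum_div, sum_sub_distrib, ← sum_mul, hswap, sq_areaDensity]
  ring

end MinimalSurface

theorem dilatation_nonlocal_conservation_law_general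
    (n : ℕ) (Ω : Set (EuclideanSpace ℝ (Fin n))) (hΩ : IsOpen Ω)
    (u : EuclideanSpace ℝ (Fin n) → ℝ) (hu : ContDiffOn ℝ 2 u Ω)
    (hsol : ∀ x ∈ Ω, (1 + ∑ j, (pd u j x) ^ 2) * (∑ i, pd (pd u i) i x)
        - ∑ i, ∑ j, pd u i x * pd u j x * pd (pd u i) j x = 0)
    (s : Fin n → EuclideanSpace ℝ (Fin n) → ℝ)
    (hs : ∀ i, ContDiffOn ℝ 1 (s i) Ω)
    (hpot : ∀ i, ∀ x ∈ Ω, pd (s i) i x = Real.sqrt (1 + ∑ j, (pd u j x) ^ 2)) :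
    ∀ x ∈ Ω,
      ∑ i, pd (fun y => s i y - y i * Real.sqrt (1 + ∑ j, (pd u j y) ^ 2)
          - u y * pd u i y / Real.sqrt (1 + ∑ j, (pd u j y) ^ 2)
          + pd u i y * (∑ j, y j * pd u j y)
              / Real.sqrt (1 + ∑ k, (pd u k y) ^ 2)) i x = 0 := by
  intro x hx
  replace hu : ContDiffAt ℝ 2 u x := hu.contDiffAt (hΩ.mem_nhds hx)
  replace hs (i : Fin n) : DifferentiableAt ℝ (s i) x :=
    ((hs i).contDiffAt (hΩ.mem_nhds hx)).differentiableAt one_ne_zero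
  have hW := hu.differentiableAt_areaDensity
  have hφ := hu.differentiableAt_dilatationCharacteristic
  have hV (i : Fin n) : DifferentiableAt ℝ (fun y => pd u i y / areaDensity u y) x := by
    simpa only [div_eq_mul_inv] using
      (hu.differentiableAt_pd i).fun_mul (hW.fun_inv (areaDensity_pos x).ne')
  have hflux : (fun i y => s i y - y i * Real.sqrt (1 + ∑ j, (pd u j y) ^ 2)
          - u y * pd u i y / Real.sqrt (1 + ∑ j, (pd u j y) ^ 2)
          + pd u i y * (∑ j, y j * pd u j y) / Real.sqrt (1 + ∑ k, (pd u k y) ^ 2))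
      = fun i y => s i y - areaDensity u y * y i
          - dilatationCharacteristic u y * (pd u i y / areaDensity u y) := by
    funext i y
    simp only [areaDensity, dilatationCharacteristic]
    ring
  have hdiv_s : divergence s x = n * areaDensity u x := by
    simp [divergence, hpot _ x hx, areaDensity]
  change divergence _ x = 0
  have hcoord (i : Fin n) : DifferentiableAt ℝ (fun y : EuclideanSpace ℝ (Fin n) => y i) x := by
    fun_prop
  rw [hflux, divergence_sub (fun i => (hs i).fun_sub (hW.fun_mul (hcoord i)))
      (fun i => hφ.fun_mul (hV i)),
    divergence_sub hs fun i => hW.fun_mul (hcoord i), divergence_mul hW hcoord,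
    divergence_mul hφ hV, divergence_coord, hu.sum_pd_dilatationCharacteristic_mul,
    hu.divergence_pd_div_areaDensity, hsol x hx, hdiv_s]
  ring

/-- The nonlocal continuity equation assigned to the dilatation `φ₄ = u − Σⱼ xʲuⱼ`
for a `C²` solution of the `n`-dimensional minimal surface equation, given
potentials `sⁱ` with `∂sⁱ/∂xⁱ = W` (no summation), where `W = √(1 + |∇u|²)`:
`Σᵢ Dᵢ( sⁱ − xⁱW − u·uᵢ/W + uᵢ·(Σⱼ xʲuⱼ)/W ) = 0`. -/
theorem dilatation_nonlocal_conservation_law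
    (n : ℕ) (hn : 1 ≤ n) (Ω : Set (EuclideanSpace ℝ (Fin n))) (hΩ : IsOpen Ω)
    (u : EuclideanSpace ℝ (Fin n) → ℝ) (hu : ContDiffOn ℝ 2 u Ω)
    (hsol : ∀ x ∈ Ω, (1 + ∑ j, (pd u j x) ^ 2) * (∑ i, pd (pd u i) i x)
        - ∑ i, ∑ j, pd u i x * pd u j x * pd (pd u i) j x = 0)
    (s : Fin n → EuclideanSpace ℝ (Fin n) → ℝ)
    (hs : ∀ i, ContDiffOn ℝ 1 (s i) Ω)
    (hpot : ∀ i, ∀ x ∈ Ω, pd (s i) i x = Real.sqrt (1 + ∑ j, (pd u j x) ^ 2)) :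
    ∀ x ∈ Ω,
      ∑ i, pd (fun y => s i y - y i * Real.sqrt (1 + ∑ j, (pd u j y) ^ 2)
          - u y * pd u i y / Real.sqrt (1 + ∑ j, (pd u j y) ^ 2)
          + pd u i y * (∑ j, y j * pd u j y)
              / Real.sqrt (1 + ∑ k, (pd u k y) ^ 2)) i x = 0 :=
  dilatation_nonlocal_conservation_law_general n Ω hΩ u hu hsol s hs hpot
end

section
/- Let k ≥ 1 be an integer and let g : ℝ → ℂ be any C² function satisfying (1 + p²)·g″(p) + 2(2k + 1)·p·g′(p) + 2k(2k + 1)·g(p) = 0 for all p ∈ ℝ. Then there exist unique constants C₃, C₄ ∈ ℂ such that g(p) = C₃·(p − i)^{−2k} + C₄·(p + i)^{−2k} for all p ∈ ℝ; i.e., the solution space of this ODE is exactly the two-dimensional span of (p − i)^{−2k} and (p + i)^{−2k}. -/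
open Complex

/-!
If `u, v` solve `(1 + p²) y'' + 2(m + 1) p y' + m(m + 1) y = 0`, Abel's identity
`(1 + p²) W' + 2(m + 1) p W = 0` makes `(1 + p²)^(m+1) W(u, v)` constant. The functions
`(p ∓ i)^(-m)` are solutions with `(1 + p²)^(m+1) W = 2im`, so for `m ≠ 0` the identity
`g W(u, v) = W(u, g) v - W(v, g) u` writes any solution `g` as a constant combination of them, and
the nonvanishing Wronskian makes them linearly independent.
-/

noncomputable def wronskian (u v : ℝ → ℂ) (p : ℝ) : ℂ := u p * deriv v p - deriv u p * v p

def SolvesHeadODE (m : ℕ) (y : ℝ → ℂ) : Prop :=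
  ∀ p : ℝ, (1 + (p : ℂ) ^ 2) * deriv (deriv y) p + 2 * (m + 1) * p * deriv y p
    + m * (m + 1) * y p = 0

section Wronskian

variable {u v : ℝ → ℂ}

theorem wronskian_mul_sub_wronskian_mul (g : ℝ → ℂ) (p : ℝ) :
    wronskian u g p * v p - wronskian v g p * u p = g p * wronskian u v p := by
  unfold wronskian; ring

theorem hasDerivAt_wronskian {p : ℝ} (hu : DifferentiableAt ℝ u p)
    (hv : DifferentiableAt ℝ v p) (hu' : DifferentiableAt ℝ (deriv u) p)
    (hv' : DifferentiableAt ℝ (deriv v) p) :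
    HasDerivAt (wronskian u v) (u p * deriv (deriv v) p - deriv (deriv u) p * v p) p := by
  refine ((hu.hasDerivAt.mul hv'.hasDerivAt).sub
    (hu'.hasDerivAt.mul hv.hasDerivAt)).congr_deriv ?_
  ring

theorem exists_forall_one_add_sq_pow_mul_eq {W W' : ℝ → ℂ} (n : ℕ)
    (hW : ∀ p, HasDerivAt W (W' p) p)
    (habel : ∀ p : ℝ, (1 + (p : ℂ) ^ 2) * W' p + 2 * (n + 1) * p * W p = 0) :
    ∃ A, ∀ p : ℝ, (1 + (p : ℂ) ^ 2) ^ (n + 1) * W p = A := by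
  have hF : ∀ p : ℝ, HasDerivAt (fun q : ℝ => (1 + (q : ℂ) ^ 2) ^ (n + 1) * W q) 0 p := by
    intro p
    have hpow : HasDerivAt (fun q : ℝ => (1 + (q : ℂ) ^ 2) ^ (n + 1))
        ((n + 1 : ℕ) * (1 + (p : ℂ) ^ 2) ^ n * (2 * p)) p := by
      have := ((hasDerivAt_pow 2 (p : ℂ)).const_add 1).pow (n + 1)
      exact (this.congr_deriv (by push_cast; ring)).comp_ofReal
    refine (hpow.mul (hW p)).congr_deriv ?_
    push_cast
    linear_combination (1 + (p : ℂ) ^ 2) ^ n * habel p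
  exact ⟨_, fun p => is_const_of_deriv_eq_zero (fun q => (hF q).differentiableAt)
    (fun q => (hF q).deriv) p 0⟩

theorem exists_forall_one_add_sq_pow_mul_wronskian_eq {m : ℕ}
    (hu : Differentiable ℝ u) (hv : Differentiable ℝ v)
    (hu' : Differentiable ℝ (deriv u)) (hv' : Differentiable ℝ (deriv v))
    (hsu : SolvesHeadODE m u) (hsv : SolvesHeadODE m v) :
    ∃ A, ∀ p : ℝ, (1 + (p : ℂ) ^ 2) ^ (m + 1) * wronskian u v p = A :=
  exists_forall_one_add_sq_pow_mul_eq m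
    (fun p => hasDerivAt_wronskian (hu p) (hv p) (hu' p) (hv' p))
    (fun p => by unfold wronskian; linear_combination u p * hsv p - v p * hsu p)

theorem eq_zero_of_forall_mul_add_mul_eq_zero {a b : ℂ} {p : ℝ}
    (hu : Differentiable ℝ u) (hv : Differentiable ℝ v) (hW : wronskian u v p ≠ 0)
    (h : ∀ q, a * u q + b * v q = 0) : a = 0 ∧ b = 0 := by
  have hderiv : a * deriv u p + b * deriv v p = 0 := by
    have hsum : HasDerivAt (fun q => a * u q + b * v q) _ p :=
      ((hu p).hasDerivAt.const_mul a).add ((hv p).hasDerivAt.const_mul b)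
    rw [show (fun q => a * u q + b * v q) = fun _ => 0 from funext h] at hsum
    exact hsum.unique (hasDerivAt_const p 0)
  unfold wronskian at hW
  constructor
  · refine (mul_eq_zero.mp ?_).resolve_right hW
    linear_combination deriv v p * h p - v p * hderiv
  · refine (mul_eq_zero.mp ?_).resolve_right hW
    linear_combination u p * hderiv - deriv u p * h p

end Wronskian

section ParticularSolutions

variable {c : ℂ}

theorem ofReal_add_ne_zero (hc : c ^ 2 = -1) (p : ℝ) : (p : ℂ) + c ≠ 0 := by
  intro h
  rw [show c = -p by linear_combination h, neg_sq, ← ofReal_pow] at hc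
  have : p ^ 2 = -1 := by exact_mod_cast hc
  nlinarith [sq_nonneg p]

theorem hasDerivAt_ofReal_add_zpow (hc : c ^ 2 = -1) (j : ℤ) (p : ℝ) :
    HasDerivAt (fun q : ℝ => ((q : ℂ) + c) ^ j) (j * ((p : ℂ) + c) ^ (j - 1)) p := by
  have := (hasDerivAt_zpow j _ (Or.inl (ofReal_add_ne_zero hc p))).comp (p : ℂ)
    ((hasDerivAt_id (p : ℂ)).add_const c)
  exact (this.congr_deriv (mul_one _)).comp_ofReal

theorem deriv_ofReal_add_zpow (hc : c ^ 2 = -1) (j : ℤ) :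
    deriv (fun q : ℝ => ((q : ℂ) + c) ^ j) = fun p : ℝ => j * ((p : ℂ) + c) ^ (j - 1) :=
  funext fun p => (hasDerivAt_ofReal_add_zpow hc j p).deriv

theorem differentiable_ofReal_add_zpow (hc : c ^ 2 = -1) (j : ℤ) :
    Differentiable ℝ (fun q : ℝ => ((q : ℂ) + c) ^ j) :=
  fun p => (hasDerivAt_ofReal_add_zpow hc j p).differentiableAt

theorem differentiable_deriv_ofReal_add_zpow (hc : c ^ 2 = -1) (j : ℤ) :
    Differentiable ℝ (deriv fun q : ℝ => ((q : ℂ) + c) ^ j) := by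
  rw [deriv_ofReal_add_zpow hc]
  exact (differentiable_ofReal_add_zpow hc _).const_mul _

theorem solvesHeadODE_ofReal_add_zpow (hc : c ^ 2 = -1) (m : ℕ) :
    SolvesHeadODE m fun q : ℝ => ((q : ℂ) + c) ^ (-(m : ℤ)) := by
  intro p
  have h2 : deriv (deriv fun q : ℝ => ((q : ℂ) + c) ^ (-(m : ℤ))) p
      = ((-m : ℤ) : ℂ) * ((-m - 1 : ℤ) * ((p : ℂ) + c) ^ (-(m : ℤ) - 1 - 1)) := by
    rw [deriv_ofReal_add_zpow hc]
    exact ((hasDerivAt_ofReal_add_zpow hc _ p).const_mul _).deriv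
  have hz := ofReal_add_ne_zero hc p
  have hzι : ((p : ℂ) + c) * ((p : ℂ) + c)⁻¹ = 1 := mul_inv_cancel₀ hz
  rw [h2, deriv_ofReal_add_zpow hc]
  simp only [zpow_sub_one₀ hz]
  push_cast
  set ι := ((p : ℂ) + c)⁻¹
  linear_combination (m * (m + 1) : ℂ) * ((p : ℂ) + c) ^ (-(m : ℤ)) *
    (ι ^ 2 * hc + (((p : ℂ) + c) * ι + 1 - 2 * c * ι - 2) * hzι)

theorem pow_mul_wronskian_ofReal_add_zpow {d : ℂ} (hc : c ^ 2 = -1) (hd : d ^ 2 = -1)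
    (m : ℕ) (p : ℝ) :
    (((p : ℂ) + c) * ((p : ℂ) + d)) ^ (m + 1) *
      wronskian (fun q : ℝ => ((q : ℂ) + c) ^ (-(m : ℤ)))
        (fun q : ℝ => ((q : ℂ) + d) ^ (-(m : ℤ))) p
      = m * (d - c) := by
  have hc0 := ofReal_add_ne_zero hc p
  have hd0 := ofReal_add_ne_zero hd p
  unfold wronskian
  rw [deriv_ofReal_add_zpow hc, deriv_ofReal_add_zpow hd]
  simp only [zpow_sub_one₀ hc0, zpow_sub_one₀ hd0, zpow_neg, zpow_natCast, mul_pow]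
  field_simp
  push_cast
  ring

end ParticularSolutions

theorem SolvesHeadODE.exists_eq_mul_add_mul {m : ℕ} {g : ℝ → ℂ} (hsg : SolvesHeadODE m g)
    (hm : m ≠ 0) (hg : ContDiff ℝ 2 g) :
    ∃ C : ℂ × ℂ, ∀ p : ℝ,
      g p = C.1 * ((p : ℂ) - I) ^ (-(m : ℤ)) + C.2 * ((p : ℂ) + I) ^ (-(m : ℤ)) := by
  simp only [sub_eq_add_neg]
  have hc : (-I) ^ 2 = -1 := by rw [neg_sq, I_sq]
  have hgd := hg.differentiable two_ne_zero
  have hgd' := hg.differentiable_deriv_two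
  obtain ⟨A, hA⟩ := exists_forall_one_add_sq_pow_mul_wronskian_eq
    (differentiable_ofReal_add_zpow hc _) hgd (differentiable_deriv_ofReal_add_zpow hc _) hgd'
    (solvesHeadODE_ofReal_add_zpow hc m) hsg
  obtain ⟨B, hB⟩ := exists_forall_one_add_sq_pow_mul_wronskian_eq
    (differentiable_ofReal_add_zpow I_sq _) hgd (differentiable_deriv_ofReal_add_zpow I_sq _) hgd'
    (solvesHeadODE_ofReal_add_zpow I_sq m) hsg
  have hm' : (2 * I * m : ℂ) ≠ 0 := by simp [hm, I_ne_zero]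
  set u := fun q : ℝ => ((q : ℂ) + -I) ^ (-(m : ℤ))
  set v := fun q : ℝ => ((q : ℂ) + I) ^ (-(m : ℤ))
  refine ⟨(-B / (2 * I * m), A / (2 * I * m)), fun p => ?_⟩
  have hW : (1 + (p : ℂ) ^ 2) ^ (m + 1) * wronskian u v p = m * (I - -I) := by
    have h := pow_mul_wronskian_ofReal_add_zpow hc I_sq m p
    rwa [show ((p : ℂ) + -I) * (p + I) = 1 + (p : ℂ) ^ 2 by linear_combination -I_sq] at h
  have hrep : g p * (2 * I * m) = A * v p - B * u p := by
    have hcomb := wronskian_mul_sub_wronskian_mul (u := u) (v := v) g p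
    rw [← hA p, ← hB p]
    linear_combination -(1 + (p : ℂ) ^ 2) ^ (m + 1) * hcomb - g p * hW
  field_simp
  linear_combination hrep

theorem eq_of_forall_mul_add_mul_eq {m : ℕ} (hm : m ≠ 0) {C C' : ℂ × ℂ}
    (h : ∀ p : ℝ, C.1 * ((p : ℂ) - I) ^ (-(m : ℤ)) + C.2 * ((p : ℂ) + I) ^ (-(m : ℤ))
      = C'.1 * ((p : ℂ) - I) ^ (-(m : ℤ)) + C'.2 * ((p : ℂ) + I) ^ (-(m : ℤ))) :
    C = C' := by
  simp only [sub_eq_add_neg] at h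
  have hc : (-I) ^ 2 = -1 := by rw [neg_sq, I_sq]
  have hW0 : wronskian (fun q : ℝ => ((q : ℂ) + -I) ^ (-(m : ℤ)))
      (fun q : ℝ => ((q : ℂ) + I) ^ (-(m : ℤ))) 0 ≠ 0 := by
    intro h0
    have h := pow_mul_wronskian_ofReal_add_zpow hc I_sq m 0
    rw [h0, mul_zero, eq_comm] at h
    simp [hm, I_ne_zero] at h
  obtain ⟨h1, h2⟩ := eq_zero_of_forall_mul_add_mul_eq_zero (a := C.1 - C'.1) (b := C.2 - C'.2)
    (differentiable_ofReal_add_zpow hc _) (differentiable_ofReal_add_zpow I_sq _) hW0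
    (fun p => by linear_combination h p)
  exact Prod.ext (sub_eq_zero.mp h1) (sub_eq_zero.mp h2)

/-- Every `C²` solution `g : ℝ → ℂ` of `(1 + p²)g″ + 2(2k+1)p·g′ + 2k(2k+1)g = 0`
is a unique complex linear combination of `(p − i)^{−2k}` and `(p + i)^{−2k}`. -/
theorem odd_head_ode_general_solution (k : ℕ) (hk : 1 ≤ k)
    (g : ℝ → ℂ) (hg : ContDiff ℝ 2 g)
    (hode : ∀ p : ℝ,
      ((1 : ℂ) + (p : ℂ) ^ 2) * deriv (deriv g) p
        + 2 * (2 * (k : ℂ) + 1) * (p : ℂ) * deriv g p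
        + 2 * (k : ℂ) * (2 * (k : ℂ) + 1) * g p = 0) :
    ∃! C : ℂ × ℂ, ∀ p : ℝ,
      g p = C.1 * ((p : ℂ) - I) ^ (-(2 * (k : ℤ)))
        + C.2 * ((p : ℂ) + I) ^ (-(2 * (k : ℤ))) := by
  have hm : 2 * k ≠ 0 := by omega
  have hsg : SolvesHeadODE (2 * k) g := fun p => by push_cast; linear_combination hode p
  obtain ⟨C, hC⟩ := hsg.exists_eq_mul_add_mul hm hg
  push_cast at hC
  refine ⟨C, hC, fun C' hC' => eq_of_forall_mul_add_mul_eq hm fun p => ?_⟩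
  push_cast
  rw [← hC p, ← hC' p]
end

section
/- The functions φ₈, φ₉ : ℝ² → ℝ defined by φ₈(p, q) = p·q³/(1 + p²)² + (3/2)·p·q/(1 + p²) and φ₉(p, q) = (p² − 1)·q³/(1 + p²)² − 3q/(1 + p²) each satisfy the symmetry-determining equation of the two-dimensional minimal surface equation: (1 + p²)·∂²φ/∂p² + 2pq·∂²φ/∂p∂q + (1 + q²)·∂²φ/∂q² = 0 for all (p, q) ∈ ℝ². -/
/-!
Both functions are odd cubics `A(p) q³ + B(p) q` in `q`. For such a function the determining
equation splits, by powers of `q`, into the two ODEs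
`(1 + p²) A'' + 6 p A' + 6 A = 0` and `(1 + p²) B'' + 2 p B' + 6 A = 0`.
The coefficients are polynomials over powers of `1 + p²`, a class closed under differentiation,
so both ODEs become identities between rational functions.
-/

open Polynomial

theorem px_eq_deriv {f : ℝ × ℝ → ℝ} {z : ℝ × ℝ} (hf : DifferentiableAt ℝ f z) :
    px f z = deriv (fun x => f (x, z.2)) z.1 := by
  have hline : HasDerivAt (fun x : ℝ => (x, z.2)) (1, 0) z.1 :=
    (hasDerivAt_id z.1).prodMk (hasDerivAt_const z.1 z.2)
  exact ((hf.hasFDerivAt.comp_hasDerivAt z.1 hline).deriv).symm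

theorem py_eq_deriv {f : ℝ × ℝ → ℝ} {z : ℝ × ℝ} (hf : DifferentiableAt ℝ f z) :
    py f z = deriv (fun y => f (z.1, y)) z.2 := by
  have hline : HasDerivAt (fun y : ℝ => (z.1, y)) (0, 1) z.2 :=
    (hasDerivAt_const z.2 z.1).prodMk (hasDerivAt_id z.2)
  exact ((hf.hasFDerivAt.comp_hasDerivAt z.2 hline).deriv).symm

noncomputable def determiningOp (φ : ℝ × ℝ → ℝ) (z : ℝ × ℝ) : ℝ :=
  (1 + z.1 ^ 2) * px (px φ) z + 2 * z.1 * z.2 * py (px φ) z + (1 + z.2 ^ 2) * py (py φ) z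

def oddCubic (A B : ℝ → ℝ) (w : ℝ × ℝ) : ℝ := A w.1 * w.2 ^ 3 + B w.1 * w.2

section oddCubic

variable {A A' A'' B B' B'' : ℝ → ℝ}

theorem px_oddCubic (hA : ∀ p, HasDerivAt A (A' p) p) (hB : ∀ p, HasDerivAt B (B' p) p) :
    px (oddCubic A B) = oddCubic A' B' := by
  funext z
  have hAd : Differentiable ℝ A := fun p => (hA p).differentiableAt
  have hBd : Differentiable ℝ B := fun p => (hB p).differentiableAt
  rw [px_eq_deriv (by unfold oddCubic; fun_prop)]
  exact (((hA z.1).mul_const (z.2 ^ 3)).add ((hB z.1).mul_const z.2)).deriv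

theorem py_oddCubic (hA : Differentiable ℝ A) (hB : Differentiable ℝ B) :
    py (oddCubic A B) = fun z => 3 * A z.1 * z.2 ^ 2 + B z.1 := by
  funext z
  rw [py_eq_deriv (by unfold oddCubic; fun_prop)]
  have h : HasDerivAt (fun y => oddCubic A B (z.1, y)) (3 * A z.1 * z.2 ^ 2 + B z.1) z.2 :=
    (((hasDerivAt_pow 3 z.2).const_mul (A z.1)).add
      ((hasDerivAt_id' z.2).const_mul (B z.1))).congr_deriv (by push_cast; ring)
  exact h.deriv

theorem py_py_oddCubic (hA : Differentiable ℝ A) (hB : Differentiable ℝ B) :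
    py (py (oddCubic A B)) = fun z => 6 * A z.1 * z.2 := by
  funext z
  rw [py_oddCubic hA hB, py_eq_deriv (by fun_prop)]
  have h : HasDerivAt (fun y => 3 * A z.1 * y ^ 2 + B z.1) (6 * A z.1 * z.2) z.2 :=
    (((hasDerivAt_pow 2 z.2).const_mul (3 * A z.1)).add_const (B z.1)).congr_deriv
      (by push_cast; ring)
  exact h.deriv

theorem determiningOp_oddCubic_eq_zero
    (hA : ∀ p, HasDerivAt A (A' p) p) (hA' : ∀ p, HasDerivAt A' (A'' p) p)
    (hB : ∀ p, HasDerivAt B (B' p) p) (hB' : ∀ p, HasDerivAt B' (B'' p) p)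
    (hcubic : ∀ p, (1 + p ^ 2) * A'' p + 6 * p * A' p + 6 * A p = 0)
    (hlinear : ∀ p, (1 + p ^ 2) * B'' p + 2 * p * B' p + 6 * A p = 0) (z : ℝ × ℝ) :
    determiningOp (oddCubic A B) z = 0 := by
  have hdiff {F F' : ℝ → ℝ} (hF : ∀ p, HasDerivAt F (F' p) p) : Differentiable ℝ F :=
    fun p => (hF p).differentiableAt
  rw [determiningOp, px_oddCubic hA hB, px_oddCubic hA' hB',
    py_oddCubic (hdiff hA') (hdiff hB'), py_py_oddCubic (hdiff hA) (hdiff hB)]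
  simp only [oddCubic]
  linear_combination z.2 ^ 3 * hcubic z.1 + z.2 * hlinear z.1

end oddCubic

noncomputable def divOneAddSqPow (N : ℝ[X]) (n : ℕ) (p : ℝ) : ℝ :=
  N.eval p / (1 + p ^ 2) ^ n

noncomputable def derivNumerator (N : ℝ[X]) (n : ℕ) : ℝ[X] :=
  derivative N * (1 + X ^ 2) - C (2 * n : ℝ) * X * N

theorem hasDerivAt_divOneAddSqPow (N : ℝ[X]) (n : ℕ) (p : ℝ) :
    HasDerivAt (divOneAddSqPow N n) (divOneAddSqPow (derivNumerator N n) (n + 1) p) p := by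
  have hD : 1 + p ^ 2 ≠ 0 := by positivity
  have h := (N.hasDerivAt p).div (((hasDerivAt_pow 2 p).const_add 1).pow n) (pow_ne_zero n hD)
  refine h.congr_deriv ?_
  rcases n with _ | n
  · simp [divOneAddSqPow, derivNumerator, hD]
  · simp only [divOneAddSqPow, derivNumerator, Pi.pow_apply, Nat.add_one_sub_one, eval_sub, eval_mul,
      eval_add, eval_one, eval_pow, eval_X, eval_C]
    push_cast
    field_simp
    ring

theorem phi8_eq_oddCubic :
    (fun w : ℝ × ℝ =>
      w.1 * w.2 ^ 3 / (1 + w.1 ^ 2) ^ 2 + (3 / 2) * (w.1 * w.2) / (1 + w.1 ^ 2))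
      = oddCubic (divOneAddSqPow X 2) (divOneAddSqPow (C (3 / 2) * X) 1) := by
  funext w
  simp only [oddCubic, divOneAddSqPow, eval_mul, eval_X, eval_C]
  field_simp

theorem phi9_eq_oddCubic :
    (fun w : ℝ × ℝ =>
      (w.1 ^ 2 - 1) * w.2 ^ 3 / (1 + w.1 ^ 2) ^ 2 - 3 * w.2 / (1 + w.1 ^ 2))
      = oddCubic (divOneAddSqPow (X ^ 2 - 1) 2) (divOneAddSqPow (C (-3)) 1) := by
  funext w
  simp only [oddCubic, divOneAddSqPow, eval_sub, eval_pow, eval_one, eval_X, eval_C]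
  field_simp
  ring

/-- The degree-3 contact symmetries `φ₈(p,q) = pq³/(1 + p²)² + (3/2)·pq/(1 + p²)`
and `φ₉(p,q) = (p² − 1)q³/(1 + p²)² − 3q/(1 + p²)` of the two-dimensional minimal
surface equation both satisfy the determining equation
`(1 + p²)φ_pp + 2pq·φ_pq + (1 + q²)φ_qq = 0`. -/
theorem phi8_phi9_satisfy_determining_equation :
    (∀ z : ℝ × ℝ,
      (1 + z.1 ^ 2)
          * px (px (fun w : ℝ × ℝ =>
              w.1 * w.2 ^ 3 / (1 + w.1 ^ 2) ^ 2 + (3 / 2) * (w.1 * w.2) / (1 + w.1 ^ 2))) z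
        + 2 * z.1 * z.2
          * py (px (fun w : ℝ × ℝ =>
              w.1 * w.2 ^ 3 / (1 + w.1 ^ 2) ^ 2 + (3 / 2) * (w.1 * w.2) / (1 + w.1 ^ 2))) z
        + (1 + z.2 ^ 2)
          * py (py (fun w : ℝ × ℝ =>
              w.1 * w.2 ^ 3 / (1 + w.1 ^ 2) ^ 2 + (3 / 2) * (w.1 * w.2) / (1 + w.1 ^ 2))) z
        = 0)
    ∧ (∀ z : ℝ × ℝ,
      (1 + z.1 ^ 2)
          * px (px (fun w : ℝ × ℝ =>
              (w.1 ^ 2 - 1) * w.2 ^ 3 / (1 + w.1 ^ 2) ^ 2 - 3 * w.2 / (1 + w.1 ^ 2))) z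
        + 2 * z.1 * z.2
          * py (px (fun w : ℝ × ℝ =>
              (w.1 ^ 2 - 1) * w.2 ^ 3 / (1 + w.1 ^ 2) ^ 2 - 3 * w.2 / (1 + w.1 ^ 2))) z
        + (1 + z.2 ^ 2)
          * py (py (fun w : ℝ × ℝ =>
              (w.1 ^ 2 - 1) * w.2 ^ 3 / (1 + w.1 ^ 2) ^ 2 - 3 * w.2 / (1 + w.1 ^ 2))) z
        = 0) := by
  rw [phi8_eq_oddCubic, phi9_eq_oddCubic]
  have hd := hasDerivAt_divOneAddSqPow
  refine ⟨determiningOp_oddCubic_eq_zero (hd _ _) (hd _ _) (hd _ _) (hd _ _) (fun p => ?_)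
      (fun p => ?_),
    determiningOp_oddCubic_eq_zero (hd _ _) (hd _ _) (hd _ _) (hd _ _) (fun p => ?_)
      (fun p => ?_)⟩
  all_goals
    simp only [divOneAddSqPow, derivNumerator, derivative_mul, derivative_add, derivative_sub,
      derivative_one, derivative_zero, derivative_C, derivative_X, derivative_X_pow, eval_mul,
      eval_add, eval_sub, eval_zero, eval_one, eval_C, eval_X, eval_pow]
    field_simp
    ring
end
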